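/- arXiv:1911.09364 — 2 statements merged into one kernel-verified Lean document; each statement's English description precedes it below -/
import Mathlib

section
/- Let R be a ring, M = (M_i)_{i=1}^n a family of R-bimodules, and Φ_{i,j} : M_i × M_j → M_{i+j} (for i+j ≤ n) R-bilinear maps satisfying the associativity condition Φ_{i+j,k}(Φ_{i,j}(m_i,m_j), m_k) = Φ_{i,j+k}(m_i, Φ_{j,k}(m_j,m_k)). Then the additive group R ⊕ M_1 ⊕ ⋯ ⊕ M_n with multiplication (m_0,…,m_n)(m'_0,…,m'_n) = (∑_{i+j=k} m_i m'_j)_{k=0}^n is an associative ring with identity (1,0,…,0), called the n-trivial extension R ⋉_n M. -/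
/-! Preamble: the `n`-trivial extension ring `R ⋉ₙ M` of a ring `R` by a family
`M = (M_i)_{1 ≤ i ≤ n}` of `R`-bimodules (a right `R`-action is encoded as a
`Rᵐᵒᵖ`-module structure) with associative bilinear pre-products
`Φ_{i,j} : M_i × M_j → M_{i+j}`. -/

namespace NTriv

variable (R : Type) [Ring R] (M : ℕ → Type)
variable [∀ i, AddCommGroup (M i)] [∀ i, Module R (M i)] [∀ i, Module Rᵐᵒᵖ (M i)]
variable [∀ i, SMulCommClass R Rᵐᵒᵖ (M i)]

/-- The extended family of abelian groups: index `0` is `R` itself, index `i+1` is `M (i+1)`. -/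
def ExtFam : ℕ → Type
  | 0 => R
  | i + 1 => M (i + 1)

instance : ∀ i, AddCommGroup (ExtFam R M i)
  | 0 => inferInstanceAs (AddCommGroup R)
  | i + 1 => inferInstanceAs (AddCommGroup (M (i + 1)))

instance : ∀ i, Module R (ExtFam R M i)
  | 0 => inferInstanceAs (Module R R)
  | i + 1 => inferInstanceAs (Module R (M (i + 1)))

instance : ∀ i, Module Rᵐᵒᵖ (ExtFam R M i)
  | 0 => inferInstanceAs (Module Rᵐᵒᵖ R)
  | i + 1 => inferInstanceAs (Module Rᵐᵒᵖ (M (i + 1)))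

/-- Transport along an equality of indices. -/
def ecast {i j : ℕ} (h : i = j) (x : ExtFam R M i) : ExtFam R M j := h ▸ x

/-- Transport along an equality of indices, for the family `M`. -/
def mcast {i j : ℕ} (h : i = j) (x : M i) : M j := h ▸ x

/-- Identification `ExtFam R M 0 = R`. -/
def toR (x : ExtFam R M 0) : R := x

/-- Identification `ExtFam R M (i+1) = M (i+1)`. -/
def toM {i : ℕ} (x : ExtFam R M (i + 1)) : M (i + 1) := x

/-- Identification `M (i+1) = ExtFam R M (i+1)`. -/
def ofM {i : ℕ} (x : M (i + 1)) : ExtFam R M (i + 1) := x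

/-- The product on the extended family induced by the pre-products `Φ`:
at index `0` it is the multiplication of `R`, and mixed products with index `0`
are given by the left and right `R`-module structures. -/
def extProd (Φ : ∀ i j, M i → M j → M (i + j)) :
    ∀ i j, ExtFam R M i → ExtFam R M j → ExtFam R M (i + j)
  | 0, 0, r, s => toR R M r * toR R M s
  | 0, j + 1, r, b => ofM R M (mcast (M := M) (by show j + 1 = 0 + j + 1; omega) (toR R M r • toM R M b))
  | i + 1, 0, a, r => ofM R M (MulOpposite.op (toR R M r) • toM R M a)
  | i + 1, j + 1, a, b => Φ (i + 1) (j + 1) (toM R M a) (toM R M b)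

/-- The underlying additive group `R ⊕ M₁ ⊕ ⋯ ⊕ M_n` of the `n`-trivial extension. -/
def Car (n : ℕ) := ∀ k : Fin (n + 1), ExtFam R M k

instance (n : ℕ) : AddCommGroup (Car R M n) := inferInstanceAs (AddCommGroup (∀ k : Fin (n+1), ExtFam R M k))

variable (n : ℕ)

/-- Extension of an element of the carrier to a function on all of `ℕ`, by zero. -/
def pad (x : Car R M n) (i : ℕ) : ExtFam R M i :=
  if h : i < n + 1 then x ⟨i, h⟩ else 0

/-- The multiplication of the `n`-trivial extension:
`((m_i)ᵢ ⬝ (m'_j)_j)_k = ∑_{i+j=k} m_i m'_j`. -/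
def trivMul (Φ : ∀ i j, M i → M j → M (i + j)) (x y : Car R M n) : Car R M n :=
  fun k => ∑ i ∈ Finset.range (n + 1),
    if h : i ≤ (k : ℕ) then
      ecast R M (by omega) (extProd R M Φ i ((k : ℕ) - i) (pad R M n x i) (pad R M n y ((k : ℕ) - i)))
    else 0

/-- `(1,0,…,0)` as a dependent function on `ℕ`. -/
def oneN : ∀ i : ℕ, ExtFam R M i
  | 0 => (1 : R)
  | _ + 1 => 0

/-- The identity element `(1,0,…,0)` of the `n`-trivial extension. -/
def trivOne : Car R M n := fun k => oneN R M k

end NTriv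

/-! Put `R` in degree `0` of the family (`ExtFam`) and let products with a degree-`0` factor be
the bimodule actions (`extProd`). This graded product is biadditive, unital and associative: its
associativity is the associativity of `R`, the bimodule axioms, the balancing of `Φ` or the
associativity of `Φ`, according to which factors lie in degree `0`. Hence the convolution of
`ℕ`-indexed sequences is a ring multiplication, associativity being the regrouping of the
triple sum over `i + j + l = k`. The degree-`k` coefficient of a convolution involves only
coefficients of degree `≤ k`, so truncating to degrees `≤ n` preserves all ring laws, and
`trivMul` is exactly this truncated convolution. -/

namespace NTriv

open Finset

section GradedConvolution

variable {A : ℕ → Type*}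

def gcast {i j : ℕ} (h : i = j) (x : A i) : A j := h ▸ x

@[simp] lemma gcast_gcast {i j l : ℕ} (h : i = j) (h' : j = l) (x : A i) :
    gcast h' (gcast h x) = gcast (h.trans h') x := by
  subst h h'; rfl

lemma gcast_apply (f : ∀ i, A i) {i j : ℕ} (h : i = j) : gcast h (f i) = f j := by
  subst h; rfl

lemma gcast_smul {S : Type*} [∀ i, SMul S (A i)] {i j : ℕ} (h : i = j) (s : S)
    (x : A i) : gcast h (s • x) = s • gcast h x := by
  subst h; rfl

lemma map_gcast_left (μ : ∀ i j, A i → A j → A (i + j)) {i i' j : ℕ}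
    (h : i = i') (a : A i) (b : A j) : μ i' j (gcast h a) b = gcast (by rw [h]) (μ i j a b) := by
  subst h; rfl

lemma map_gcast_right (μ : ∀ i j, A i → A j → A (i + j)) {i j j' : ℕ}
    (h : j = j') (a : A i) (b : A j) : μ i j' a (gcast h b) = gcast (by rw [h]) (μ i j a b) := by
  subst h; rfl

variable [∀ i, AddCommMonoid (A i)]

@[simp] lemma gcast_zero {i j : ℕ} (h : i = j) : gcast h (0 : A i) = 0 := by
  subst h; rfl

lemma gcast_add {i j : ℕ} (h : i = j) (x y : A i) : gcast h (x + y) = gcast h x + gcast h y := by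
  subst h; rfl

lemma gcast_sum {ι : Type*} {s : Finset ι} {i j : ℕ} (h : i = j) (x : ι → A i) :
    gcast h (∑ a ∈ s, x a) = ∑ a ∈ s, gcast h (x a) := by
  subst h; rfl

variable (μ : ∀ i j, A i →+ A j →+ A (i + j))

lemma gcast_mul_congr {a b a' b' k : ℕ} (ha : a = a') (hb : b = b') (h : a + b = k)
    (h' : a' + b' = k) (x : A a) (y : A b) :
    gcast h (μ a b x y) = gcast h' (μ a' b' (gcast ha x) (gcast hb y)) := by
  subst ha hb; rfl

/-- The condition `i ≤ k`, always true on `range (k + 1)`, only supplies the cast along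
`i + (k - i) = k`, exactly as in `trivMul`. -/
def gconv (f g : ∀ i, A i) (k : ℕ) : A k :=
  ∑ i ∈ range (k + 1),
    if h : i ≤ k then gcast (Nat.add_sub_of_le h) (μ i (k - i) (f i) (g (k - i))) else 0

lemma gconv_congr {f f' g g' : ∀ i, A i} {k : ℕ} (hf : ∀ i ≤ k, f i = f' i)
    (hg : ∀ i ≤ k, g i = g' i) : gconv μ f g k = gconv μ f' g' k := by
  refine sum_congr rfl fun i _ => ?_
  split_ifs with h
  · rw [hf i h, hg (k - i) (Nat.sub_le k i)]
  · rfl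

lemma gconv_add_left (f f' g : ∀ i, A i) (k : ℕ) :
    gconv μ (f + f') g k = gconv μ f g k + gconv μ f' g k := by
  simp only [gconv, ← sum_add_distrib]
  refine sum_congr rfl fun i _ => ?_
  split_ifs
  · rw [Pi.add_apply, map_add, AddMonoidHom.add_apply, gcast_add]
  · rw [add_zero]

lemma gconv_add_right (f g g' : ∀ i, A i) (k : ℕ) :
    gconv μ f (g + g') k = gconv μ f g k + gconv μ f g' k := by
  simp only [gconv, ← sum_add_distrib]
  refine sum_congr rfl fun i _ => ?_
  split_ifs
  · rw [Pi.add_apply, map_add, gcast_add]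
  · rw [add_zero]

lemma gconv_unit_left {u : ∀ i, A i} (hu : ∀ i ≠ 0, u i = 0)
    (hu₀ : ∀ j (b : A j), μ 0 j (u 0) b = gcast (zero_add j).symm b) (f : ∀ i, A i)
    (k : ℕ) :
    gconv μ u f k = f k := by
  rw [gconv, sum_eq_single_of_mem 0 (by simp) fun i _ hi => by rw [hu i hi]; simp,
    dif_pos k.zero_le, hu₀, gcast_gcast, gcast_apply]

lemma gconv_unit_right {u : ∀ i, A i} (hu : ∀ i ≠ 0, u i = 0)
    (hu₀ : ∀ i (a : A i), μ i 0 a (u 0) = a) (f : ∀ i, A i) (k : ℕ) :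
    gconv μ f u k = f k := by
  rw [gconv, sum_eq_single_of_mem k (by simp) fun i hi hik => by
      rw [hu (k - i) (by simp only [mem_range] at hi; omega)]; simp, dif_pos le_rfl,
    gcast_mul_congr μ rfl (Nat.sub_self k) _ (add_zero k), gcast_apply u, hu₀]
  rfl

def gconvTerm (f g h : ∀ i, A i) (k i j : ℕ) : A k :=
  if hij : i + j ≤ k then
    gcast (by omega) (μ (i + j) (k - i - j) (μ i j (f i) (g j)) (h (k - i - j)))
  else 0

lemma gconv_assoc
    (hμ : ∀ i j l (a : A i) (b : A j) (c : A l),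
      μ (i + j) l (μ i j a b) c = gcast (add_assoc i j l).symm (μ i (j + l) a (μ j l b c)))
    (f g h : ∀ i, A i) (k : ℕ) :
    gconv μ (gconv μ f g) h k = gconv μ f (gconv μ g h) k := by
  -- both sides are `∑_{i + j ≤ k} gconvTerm i j`, grouped by `i + j` on the left and by `i` on
  -- the right; `sum_range_diag_flip` is this regrouping
  have hL : gconv μ (gconv μ f g) h k =
      ∑ a ∈ range (k + 1), ∑ i ∈ range (a + 1), gconvTerm μ f g h k i (a - i) := by
    refine sum_congr rfl fun a ha => ?_
    have hak : a ≤ k := Nat.lt_succ_iff.mp (mem_range.mp ha)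
    rw [dif_pos hak, gconv, map_sum, AddMonoidHom.finsetSum_apply, gcast_sum]
    refine sum_congr rfl fun i hi => ?_
    have hia : i ≤ a := Nat.lt_succ_iff.mp (mem_range.mp hi)
    rw [dif_pos hia, gconvTerm, dif_pos (by omega),
      gcast_mul_congr μ (Nat.add_sub_of_le hia) (show k - i - (a - i) = k - a by omega),
      gcast_apply]
  have hR : gconv μ f (gconv μ g h) k =
      ∑ i ∈ range (k + 1), ∑ j ∈ range (k + 1 - i), gconvTerm μ f g h k i j := by
    refine sum_congr rfl fun i hi => ?_
    have hik : i ≤ k := Nat.lt_succ_iff.mp (mem_range.mp hi)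
    rw [dif_pos hik, gconv, map_sum, gcast_sum, show k + 1 - i = k - i + 1 by omega]
    refine sum_congr rfl fun j hj => ?_
    have hjk : j ≤ k - i := Nat.lt_succ_iff.mp (mem_range.mp hj)
    rw [dif_pos hjk, gconvTerm, dif_pos (by omega), hμ, gcast_gcast,
      gcast_mul_congr μ rfl (Nat.add_sub_of_le hjk) (h' := Nat.add_sub_of_le hik)]
    rfl
  rw [hL, hR, sum_range_diag_flip]

end GradedConvolution

lemma mcast_eq_gcast {M : ℕ → Type} {i j : ℕ} (h : i = j) (x : M i) :
    mcast M h x = gcast h x :=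
  rfl

lemma gcast_ofM {R : Type} {M : ℕ → Type} {i j : ℕ} (h : i + 1 = j + 1) (x : M (i + 1)) :
    gcast h (ofM R M x) = ofM R M (gcast h x) := by
  obtain rfl : i = j := by omega
  rfl

variable (R : Type) [Ring R] (M : ℕ → Type) [∀ i, AddCommGroup (M i)]

structure IsBiadditive (Φ : ∀ i j, M i → M j → M (i + j)) : Prop where
  add_left : ∀ i j (a a' : M i) (b : M j), Φ i j (a + a') b = Φ i j a b + Φ i j a' b
  add_right : ∀ i j (a : M i) (b b' : M j), Φ i j a (b + b') = Φ i j a b + Φ i j a b'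

lemma oneN_eq_zero : ∀ i ≠ 0, oneN R M i = 0
  | _ + 1, _ => rfl

section ExtProd

variable [∀ i, Module R (M i)] [∀ i, Module Rᵐᵒᵖ (M i)]
variable {Φ : ∀ i j, M i → M j → M (i + j)}

lemma extProd_add_left (hΦ : IsBiadditive M Φ) :
    ∀ i j (a a' : ExtFam R M i) (b : ExtFam R M j),
      extProd R M Φ i j (a + a') b = extProd R M Φ i j a b + extProd R M Φ i j a' b
  | 0, 0, a, a', b => add_mul (toR R M a) (toR R M a') (toR R M b)
  | 0, _ + 1, a, a', b => by
    show mcast M _ ((toR R M a + toR R M a') • toM R M b) = _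
    rw [add_smul, mcast_eq_gcast, gcast_add]
    rfl
  | _ + 1, 0, a, a', b => smul_add (MulOpposite.op (toR R M b)) (toM R M a) (toM R M a')
  | _ + 1, _ + 1, a, a', b => hΦ.add_left _ _ _ _ _

lemma extProd_add_right (hΦ : IsBiadditive M Φ) :
    ∀ i j (a : ExtFam R M i) (b b' : ExtFam R M j),
      extProd R M Φ i j a (b + b') = extProd R M Φ i j a b + extProd R M Φ i j a b'
  | 0, 0, a, b, b' => mul_add (toR R M a) (toR R M b) (toR R M b')
  | 0, _ + 1, a, b, b' => by
    show mcast M _ (toR R M a • (toM R M b + toM R M b')) = _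
    rw [smul_add, mcast_eq_gcast, gcast_add]
    rfl
  | _ + 1, 0, a, b, b' =>
    add_smul (MulOpposite.op (toR R M b)) (MulOpposite.op (toR R M b')) (toM R M a)
  | _ + 1, _ + 1, a, b, b' => hΦ.add_right _ _ _ _ _

def extProdHom (hΦ : IsBiadditive M Φ) (i j : ℕ) :
    ExtFam R M i →+ ExtFam R M j →+ ExtFam R M (i + j) :=
  AddMonoidHom.mk'
    (fun a => AddMonoidHom.mk' (extProd R M Φ i j a) (extProd_add_right R M hΦ i j a))
    fun a a' => AddMonoidHom.ext (extProd_add_left R M hΦ i j a a')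

lemma extProd_one_left : ∀ j (b : ExtFam R M j),
    extProd R M Φ 0 j (oneN R M 0) b = gcast (zero_add j).symm b
  | 0, b => one_mul (toR R M b)
  | j + 1, b => by
    show ofM R M (mcast M _ ((1 : R) • toM R M b)) = gcast _ (ofM R M (toM R M b))
    rw [one_smul, gcast_ofM, mcast_eq_gcast]

lemma extProd_one_right : ∀ i (a : ExtFam R M i), extProd R M Φ i 0 a (oneN R M 0) = a
  | 0, a => mul_one (toR R M a)
  | _ + 1, a => one_smul Rᵐᵒᵖ (toM R M a)

lemma extProd_assoc [∀ i, SMulCommClass R Rᵐᵒᵖ (M i)]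
    (hsmul_left : ∀ i j (r : R) (a : M i) (b : M j), Φ i j (r • a) b = r • Φ i j a b)
    (hsmul_right : ∀ i j (r : Rᵐᵒᵖ) (a : M i) (b : M j),
      Φ i j a (r • b) = r • Φ i j a b)
    (hbalanced : ∀ i j (r : R) (a : M i) (b : M j),
      Φ i j (MulOpposite.op r • a) b = Φ i j a (r • b))
    (hassoc : ∀ i j k (a : M i) (b : M j) (c : M k),
      Φ (i + j) k (Φ i j a b) c = mcast M (add_assoc i j k).symm (Φ i (j + k) a (Φ j k b c))) :
    ∀ i j k (a : ExtFam R M i) (b : ExtFam R M j) (c : ExtFam R M k),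
      extProd R M Φ (i + j) k (extProd R M Φ i j a b) c
        = gcast (add_assoc i j k).symm (extProd R M Φ i (j + k) a (extProd R M Φ j k b c))
  | 0, 0, 0, a, b, c => mul_assoc (toR R M a) (toR R M b) (toR R M c)
  | 0, 0, k + 1, a, b, c => by
    show ofM R M (mcast M _ ((toR R M a * toR R M b) • toM R M c))
      = gcast _ (ofM R M (mcast M _ (toR R M a • mcast M _ (toR R M b • toM R M c))))
    simp only [mcast_eq_gcast, gcast_ofM, gcast_smul, gcast_gcast, mul_smul]
  | 0, j + 1, 0, a, b, c => by
    show ofM R M (MulOpposite.op (toR R M c) • mcast M _ (toR R M a • toM R M b))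
      = ofM R M (mcast M _ (toR R M a • MulOpposite.op (toR R M c) • toM R M b))
    rw [mcast_eq_gcast, mcast_eq_gcast, ← gcast_smul, smul_comm (toR R M a)]
  | 0, j + 1, k + 1, a, b, c => by
    show ofM R M (Φ (0 + j + 1) (k + 1) (mcast M _ (toR R M a • toM R M b)) (toM R M c))
      = gcast (A := ExtFam R M) _
          (ofM R M (mcast M _ (toR R M a • Φ (j + 1) (k + 1) (toM R M b) (toM R M c))))
    rw [mcast_eq_gcast, map_gcast_left Φ, hsmul_left, mcast_eq_gcast, gcast_ofM, gcast_gcast]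
  | i + 1, 0, 0, a, b, c => by
    show ofM R M (MulOpposite.op (toR R M c) • MulOpposite.op (toR R M b) • toM R M a)
      = ofM R M (MulOpposite.op (toR R M b * toR R M c) • toM R M a)
    rw [MulOpposite.op_mul, mul_smul]
  | i + 1, 0, k + 1, a, b, c => by
    show ofM R M (Φ (i + 1) (k + 1) (MulOpposite.op (toR R M b) • toM R M a) (toM R M c))
      = gcast (A := ExtFam R M) _
          (ofM R M (Φ (i + 1) (0 + k + 1) (toM R M a) (mcast M _ (toR R M b • toM R M c))))
    rw [hbalanced, mcast_eq_gcast, map_gcast_right Φ, gcast_ofM, gcast_gcast]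
    rfl
  | i + 1, j + 1, 0, a, b, c => (hsmul_right _ _ _ _ _).symm
  | i + 1, j + 1, k + 1, a, b, c => by
    show Φ (i + 1 + (j + 1)) (k + 1) (Φ (i + 1) (j + 1) (toM R M a) (toM R M b)) (toM R M c)
      = gcast (add_assoc (i + 1) (j + 1) (k + 1)).symm
          (ofM R M (Φ (i + 1) (j + 1 + (k + 1)) (toM R M a)
            (Φ (j + 1) (k + 1) (toM R M b) (toM R M c))))
    rw [gcast_ofM, hassoc, mcast_eq_gcast]
    rfl

end ExtProd

section Truncation

variable (n : ℕ)

lemma pad_apply (x : Car R M n) (k : Fin (n + 1)) : pad R M n x k = x k := dif_pos k.isLt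

lemma pad_add (x y : Car R M n) : pad R M n (x + y) = pad R M n x + pad R M n y := by
  funext i
  by_cases hi : i < n + 1
  · simp only [pad, dif_pos hi, Pi.add_apply]
    rfl
  · simp only [pad, dif_neg hi, Pi.add_apply, add_zero]

lemma pad_trivOne : pad R M n (trivOne R M n) = oneN R M := by
  funext i
  by_cases hi : i < n + 1
  · exact dif_pos hi
  · exact (dif_neg hi).trans (oneN_eq_zero R M i (by omega)).symm

variable [∀ i, Module R (M i)] [∀ i, Module Rᵐᵒᵖ (M i)]
variable {Φ : ∀ i j, M i → M j → M (i + j)}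

lemma trivMul_apply (hΦ : IsBiadditive M Φ) (x y : Car R M n) (k : Fin (n + 1)) :
    trivMul R M n Φ x y k
      = gconv (extProdHom R M hΦ) (pad R M n x) (pad R M n y) k := by
  refine (sum_subset (range_subset_range.mpr k.isLt) fun i hi hik => ?_).symm
  simp only [mem_range] at hi hik
  exact dif_neg (by omega)

lemma pad_trivMul (hΦ : IsBiadditive M Φ)
    (x y : Car R M n) {i : ℕ} (hi : i ≤ n) :
    pad R M n (trivMul R M n Φ x y) i
      = gconv (extProdHom R M hΦ) (pad R M n x) (pad R M n y) i :=
  (dif_pos (Nat.lt_succ_of_le hi)).trans (trivMul_apply R M n hΦ x y ⟨i, _⟩)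

lemma trivMul_assoc (hΦ : IsBiadditive M Φ)
    (hassoc : ∀ i j k (a : ExtFam R M i) (b : ExtFam R M j) (c : ExtFam R M k),
      extProd R M Φ (i + j) k (extProd R M Φ i j a b) c
        = gcast (add_assoc i j k).symm (extProd R M Φ i (j + k) a (extProd R M Φ j k b c)))
    (x y z : Car R M n) :
    trivMul R M n Φ (trivMul R M n Φ x y) z = trivMul R M n Φ x (trivMul R M n Φ y z) := by
  funext k
  have hk : (k : ℕ) ≤ n := k.is_le
  rw [trivMul_apply R M n hΦ, trivMul_apply R M n hΦ,
    gconv_congr _ (fun i hi => pad_trivMul R M n hΦ x y (hi.trans hk))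
      fun _ _ => rfl,
    gconv_congr _ (fun _ _ => rfl)
      fun i hi => pad_trivMul R M n hΦ y z (hi.trans hk)]
  exact gconv_assoc _ hassoc _ _ _ k

lemma trivOne_trivMul (hΦ : IsBiadditive M Φ)
    (x : Car R M n) : trivMul R M n Φ (trivOne R M n) x = x := by
  funext k
  rw [trivMul_apply R M n hΦ, pad_trivOne,
    gconv_unit_left _ (oneN_eq_zero R M) (extProd_one_left R M), pad_apply]

lemma trivMul_trivOne (hΦ : IsBiadditive M Φ)
    (x : Car R M n) : trivMul R M n Φ x (trivOne R M n) = x := by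
  funext k
  rw [trivMul_apply R M n hΦ, pad_trivOne,
    gconv_unit_right _ (oneN_eq_zero R M) (extProd_one_right R M), pad_apply]

lemma trivMul_add (hΦ : IsBiadditive M Φ)
    (x y z : Car R M n) :
    trivMul R M n Φ x (y + z) = trivMul R M n Φ x y + trivMul R M n Φ x z := by
  funext k
  show _ = trivMul R M n Φ x y k + trivMul R M n Φ x z k
  simp only [trivMul_apply R M n hΦ, pad_add, gconv_add_right]

lemma add_trivMul (hΦ : IsBiadditive M Φ)
    (x y z : Car R M n) :
    trivMul R M n Φ (x + y) z = trivMul R M n Φ x z + trivMul R M n Φ y z := by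
  funext k
  show _ = trivMul R M n Φ x z k + trivMul R M n Φ y z k
  simp only [trivMul_apply R M n hΦ, pad_add, gconv_add_left]

end Truncation

end NTriv

namespace NTriv

variable (R : Type) [Ring R] (M : ℕ → Type)
variable [∀ i, AddCommGroup (M i)] [∀ i, Module R (M i)] [∀ i, Module Rᵐᵒᵖ (M i)]
variable [∀ i, SMulCommClass R Rᵐᵒᵖ (M i)]
variable (n : ℕ)

theorem statement_0
    (Φ : ∀ i j, M i → M j → M (i + j))
    (hadd_left : ∀ i j (a a' : M i) (b : M j), Φ i j (a + a') b = Φ i j a b + Φ i j a' b)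
    (hadd_right : ∀ i j (a : M i) (b b' : M j), Φ i j a (b + b') = Φ i j a b + Φ i j a b')
    (hsmul_left : ∀ i j (r : R) (a : M i) (b : M j), Φ i j (r • a) b = r • Φ i j a b)
    (hsmul_right : ∀ i j (r : Rᵐᵒᵖ) (a : M i) (b : M j), Φ i j a (r • b) = r • Φ i j a b)
    (hbalanced : ∀ i j (r : R) (a : M i) (b : M j),
      Φ i j (MulOpposite.op r • a) b = Φ i j a (r • b))
    (hassoc : ∀ i j k (a : M i) (b : M j) (c : M k),
      Φ (i + j) k (Φ i j a b) c = mcast (M := M) (add_assoc i j k).symm (Φ i (j + k) a (Φ j k b c))) :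
    (∀ x y z : Car R M n,
        trivMul R M n Φ (trivMul R M n Φ x y) z = trivMul R M n Φ x (trivMul R M n Φ y z)) ∧
    (∀ x : Car R M n, trivMul R M n Φ (trivOne R M n) x = x) ∧
    (∀ x : Car R M n, trivMul R M n Φ x (trivOne R M n) = x) ∧
    (∀ x y z : Car R M n,
        trivMul R M n Φ x (y + z) = trivMul R M n Φ x y + trivMul R M n Φ x z) ∧
    (∀ x y z : Car R M n,
        trivMul R M n Φ (x + y) z = trivMul R M n Φ x z + trivMul R M n Φ y z) :=
  have hΦ : IsBiadditive M Φ := ⟨hadd_left, hadd_right⟩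
  ⟨trivMul_assoc R M n hΦ (extProd_assoc R M hsmul_left hsmul_right hbalanced hassoc),
    trivOne_trivMul R M n hΦ, trivMul_trivOne R M n hΦ, trivMul_add R M n hΦ, add_trivMul R M n hΦ⟩

end NTriv
end

section
/- Conversely, every unital left module X over S = R ⋉_n M arises as in the previous construction: restricting along the ring inclusion i : R → S makes X a left R-module, and the maps α_i : M_i ⊗_R X → X given by α_i(m_i ⊗ x) = (0,…,0,m_i,0,…,0)·x are R-linear and satisfy conditions (i) α_i ∘ (M_i ⊗ α_j) = 0 for i+j > n and (ii) α_{i+j} ∘ (Φ̃_{i,j} ⊗ id_X) = α_i ∘ (id_{M_i} ⊗ α_j) for i+j ≤ n; moreover the S-action is recovered as (a,m_1,…,m_n)·x = a·x + ∑_i α_i(m_i ⊗ x). -/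
namespace NTriv

variable (R : Type) [Ring R] (M : ℕ → Type)
variable [∀ i, AddCommGroup (M i)] [∀ i, Module R (M i)] [∀ i, Module Rᵐᵒᵖ (M i)]
variable [∀ i, SMulCommClass R Rᵐᵒᵖ (M i)]
variable (n : ℕ)

/-- `r ∈ R` viewed as the element `(r, 0, …, 0)` of `R ⋉ₙ M`
(the canonical ring inclusion `i : R → S`). -/
def embR (r : R) : Car R M n := fun k =>
  if h : (k : ℕ) = 0 then ecast R M h.symm r else 0

/-- An element `m` of the `i`-th component viewed as `(0, …, 0, m, 0, …, 0)` in `R ⋉ₙ M`. -/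
def embM (i : ℕ) (m : ExtFam R M i) : Car R M n := fun k =>
  if h : (k : ℕ) = i then ecast R M h.symm m else 0

end NTriv

/-!
A module structure over `S` is additive and multiplicative in the ring argument, so everything
reduces to products of homogeneous elements: `(0,…,m,…,0) · (0,…,m',…,0)` is `extProd m m'`
placed in degree `i + j`, which is `0` once `i + j > n`, and the inclusion `R → S` is the
degree-`0` case. The recovery formula is the decomposition of `s ∈ S` into homogeneous parts.
-/

namespace NTriv

variable {R : Type} {M : ℕ → Type} {n : ℕ}

theorem ecast_rfl {i : ℕ} (a : ExtFam R M i) : ecast R M rfl a = a := rfl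

theorem mcast_heq {i j : ℕ} (h : i = j) (x : M i) : HEq (mcast (M := M) h x) x := by
  subst h; rfl

variable [Ring R] [∀ i, AddCommGroup (M i)]

theorem ecast_zero {i j : ℕ} (h : i = j) : ecast R M h (0 : ExtFam R M i) = 0 := by
  subst h; rfl

theorem ecast_add {i j : ℕ} (h : i = j) (a b : ExtFam R M i) :
    ecast R M h (a + b) = ecast R M h a + ecast R M h b := by
  subst h; rfl

theorem mcast_zero {i j : ℕ} (h : i = j) : mcast (M := M) h 0 = 0 := by
  subst h; rfl

theorem embR_one : embR R M n 1 = trivOne R M n := by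
  funext ⟨k, hk⟩
  cases k <;> rfl

theorem embM_of_lt {i : ℕ} (hi : n < i) (m : ExtFam R M i) : embM R M n i m = 0 := by
  funext ⟨k, hk⟩
  exact dif_neg (by omega)

theorem embM_congr_heq {i j : ℕ} (h : i = j) {x : ExtFam R M i} {y : ExtFam R M j}
    (hxy : HEq x y) : embM R M n i x = embM R M n j y := by
  subst h; cases hxy; rfl

theorem pad_embM {i : ℕ} (hi : i ≤ n) (m : ExtFam R M i) (t : ℕ) :
    pad R M n (embM R M n i m) t = if h : t = i then ecast R M h.symm m else 0 := by
  by_cases ht : t < n + 1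
  · rw [pad, dif_pos ht]
    rfl
  · rw [pad, dif_neg ht, dif_neg (by omega)]

theorem embM_add (i : ℕ) (m m' : ExtFam R M i) :
    embM R M n i (m + m') = embM R M n i m + embM R M n i m' := by
  funext ⟨k, hk⟩
  show embM R M n i (m + m') ⟨k, hk⟩ = embM R M n i m ⟨k, hk⟩ + embM R M n i m' ⟨k, hk⟩
  simp only [embM]
  split_ifs with h
  · exact ecast_add _ _ _
  · exact (add_zero 0).symm

theorem embR_add (r r' : R) : embR R M n (r + r') = embR R M n r + embR R M n r' :=
  embM_add 0 r r'

theorem eq_embR_add_sum_embM (s : Car R M n) :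
    s = embR R M n (toR R M (s ⟨0, Nat.succ_pos n⟩)) +
      ∑ i ∈ Finset.range n, embM R M n (i + 1) (pad R M n s (i + 1)) := by
  funext ⟨k, hk⟩
  show s ⟨k, hk⟩ =
    embR R M n _ ⟨k, hk⟩ + (∑ i ∈ Finset.range n, embM R M n (i + 1) _) ⟨k, hk⟩
  erw [Finset.sum_apply]
  cases k with
  | zero =>
    rw [Finset.sum_eq_zero fun t _ => dif_neg (Nat.succ_ne_zero t).symm, add_zero]
    rfl
  | succ k =>
    rw [Finset.sum_eq_single_of_mem k (Finset.mem_range.mpr (by omega))]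
    · rw [embR, dif_neg (Nat.succ_ne_zero k), zero_add, embM, dif_pos rfl, ecast_rfl, pad,
        dif_pos hk]
    · intro t _ ht
      exact dif_neg fun h => ht (Nat.succ_inj.mp h).symm

variable [∀ i, Module R (M i)] [∀ i, Module Rᵐᵒᵖ (M i)]

variable {Φ : ∀ i j, M i → M j → M (i + j)}

theorem ecast_extProd {i j d k : ℕ} (hd : d = j) (hk : i + d = k)
    (a : ExtFam R M i) (b : ExtFam R M j) :
    ecast R M hk (extProd R M Φ i d a (ecast R M hd.symm b)) =
      ecast R M (hd ▸ hk) (extProd R M Φ i j a b) := by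
  subst hd hk; rfl

theorem extProd_zero_left (hΦ : ∀ i j (b : M j), Φ i j 0 b = 0) (i j : ℕ)
    (b : ExtFam R M j) : extProd R M Φ i j 0 b = 0 := by
  cases i <;> cases j
  · exact zero_mul (toR R M b)
  · show ofM R M (mcast (M := M) _ ((0 : R) • toM R M b)) = 0
    rw [zero_smul, mcast_zero]
    rfl
  · exact smul_zero _
  · exact hΦ _ _ _

theorem extProd_zero_right (hΦ : ∀ i j (a : M i), Φ i j a 0 = 0) (i j : ℕ)
    (a : ExtFam R M i) : extProd R M Φ i j a 0 = 0 := by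
  cases i <;> cases j
  · exact mul_zero (toR R M a)
  · show ofM R M (mcast (M := M) _ (toR R M a • (0 : M _))) = 0
    rw [smul_zero, mcast_zero]
    rfl
  · show ofM R M (MulOpposite.op (0 : R) • toM R M a) = 0
    rw [MulOpposite.op_zero, zero_smul]
    rfl
  · exact hΦ _ _ _

theorem extProd_deg_zero_left_heq {i : ℕ} (r : R) (m : ExtFam R M i) :
    HEq (extProd R M Φ 0 i r m) (r • m) := by
  cases i
  · exact heq_of_eq (smul_eq_mul r m).symm
  · exact mcast_heq _ _

theorem extProd_deg_zero_right {i : ℕ} (m : ExtFam R M i) (r : R) :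
    extProd R M Φ i 0 m r = MulOpposite.op r • m := by
  cases i
  · exact (op_smul_eq_mul r m).symm
  · rfl

/-- For `n < i + j` the right-hand side is `0` by `embM_of_lt`. -/
theorem trivMul_embM (hΦl : ∀ i j (b : M j), Φ i j 0 b = 0)
    (hΦr : ∀ i j (a : M i), Φ i j a 0 = 0)
    {i j : ℕ} (hi : i ≤ n) (hj : j ≤ n) (a : ExtFam R M i) (b : ExtFam R M j) :
    trivMul R M n Φ (embM R M n i a) (embM R M n j b) =
      embM R M n (i + j) (extProd R M Φ i j a b) := by
  funext ⟨k, hk⟩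
  show ∑ t ∈ Finset.range (n + 1), _ = dite _ _ _
  rw [Finset.sum_eq_single_of_mem i (Finset.mem_range.mpr (by omega))]
  · simp only [pad_embM hi, pad_embM hj, dif_pos, ecast_rfl]
    by_cases hik : i ≤ k
    · rw [dif_pos hik]
      by_cases hkij : k = i + j
      · subst hkij
        have hsub : i + j - i = j := Nat.add_sub_cancel_left ..
        rw [dif_pos hsub, ecast_extProd hsub, dif_pos rfl]
      · rw [dif_neg (by omega), dif_neg hkij, extProd_zero_right hΦr, ecast_zero]
    · rw [dif_neg hik, dif_neg (by omega)]
  · intro t _ ht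
    simp only [pad_embM hi, dif_neg ht, extProd_zero_left hΦl, ecast_zero, dite_eq_ite,
      ite_self]

end NTriv

namespace NTriv

variable (R : Type) [Ring R] (M : ℕ → Type)
variable [∀ i, AddCommGroup (M i)] [∀ i, Module R (M i)] [∀ i, Module Rᵐᵒᵖ (M i)]
variable [∀ i, SMulCommClass R Rᵐᵒᵖ (M i)]
variable (n : ℕ)

theorem statement_3
    (Φ : ∀ i j, M i → M j → M (i + j))
    (hsmul_left : ∀ i j (r : R) (a : M i) (b : M j), Φ i j (r • a) b = r • Φ i j a b)
    (hsmul_right : ∀ i j (r : Rᵐᵒᵖ) (a : M i) (b : M j), Φ i j a (r • b) = r • Φ i j a b)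
    (X : Type) [AddCommGroup X]
    -- `X` is a unital left `S`-module, with action `σ`:
    (σ : Car R M n → X → X)
    (hone : ∀ x, σ (trivOne R M n) x = x)
    (hmul : ∀ s t x, σ (trivMul R M n Φ s t) x = σ s (σ t x))
    (hadd₁ : ∀ s t x, σ (s + t) x = σ s x + σ t x) :
    -- restriction of scalars along `i : R → S` makes `X` a left `R`-module:
    ((∀ x, σ (embR R M n 1) x = x) ∧
      (∀ (r r' : R) x, σ (embR R M n (r * r')) x = σ (embR R M n r) (σ (embR R M n r') x)) ∧
      (∀ (r r' : R) x, σ (embR R M n (r + r')) x = σ (embR R M n r) x + σ (embR R M n r') x)) ∧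
    -- each `αᵢ := σ (embM i ·)` is `R`-bilinear and balanced (`R`-linear on `Mᵢ ⊗_R X`):
    (∀ i, 1 ≤ i → i ≤ n →
      (∀ (m m' : ExtFam R M i) x, σ (embM R M n i (m + m')) x =
        σ (embM R M n i m) x + σ (embM R M n i m') x) ∧
      (∀ (r : R) (m : ExtFam R M i) x,
        σ (embM R M n i (r • m)) x = σ (embR R M n r) (σ (embM R M n i m) x)) ∧
      (∀ (r : R) (m : ExtFam R M i) x,
        σ (embM R M n i (MulOpposite.op r • m)) x = σ (embM R M n i m) (σ (embR R M n r) x))) ∧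
    -- condition (i):
    (∀ i j, 1 ≤ i → i ≤ n → 1 ≤ j → j ≤ n → n < i + j →
      ∀ (m : ExtFam R M i) (m' : ExtFam R M j) x,
        σ (embM R M n i m) (σ (embM R M n j m') x) = 0) ∧
    -- condition (ii):
    (∀ i j, 1 ≤ i → 1 ≤ j → i + j ≤ n →
      ∀ (m : ExtFam R M i) (m' : ExtFam R M j) x,
        σ (embM R M n (i + j) (extProd R M Φ i j m m')) x =
          σ (embM R M n i m) (σ (embM R M n j m') x)) ∧
    -- the action is recovered by the formula of Statement 2:
    (∀ (s : Car R M n) x,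
      σ s x = σ (embR R M n (toR R M (s ⟨0, Nat.succ_pos n⟩))) x +
        ∑ i ∈ Finset.range n, σ (embM R M n (i + 1) (pad R M n s (i + 1))) x) := by
  let act (x : X) : Car R M n →+ X := AddMonoidHom.mk' (σ · x) (hadd₁ · · x)
  have hΦl : ∀ i j (b : M j), Φ i j 0 b = 0 := fun i j b => by
    simpa using hsmul_left i j 0 0 b
  have hΦr : ∀ i j (a : M i), Φ i j a 0 = 0 := fun i j a => by
    simpa using hsmul_right i j 0 a 0
  have hσ_embM : ∀ i j, i ≤ n → j ≤ n → ∀ (a : ExtFam R M i) (b : ExtFam R M j) x,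
      σ (embM R M n (i + j) (extProd R M Φ i j a b)) x =
        σ (embM R M n i a) (σ (embM R M n j b) x) :=
    fun i j hi hj a b x => by rw [← trivMul_embM hΦl hΦr hi hj, hmul]
  refine ⟨⟨fun x => ?_, fun r r' x => ?_, fun r r' x => ?_⟩,
    fun i _ hi => ⟨fun m m' x => ?_, fun r m x => ?_, fun r m x => ?_⟩,
    fun i j _ hi _ hj hij m m' x => ?_, fun i j _ _ hij m m' x => ?_, fun s x => ?_⟩
  · rw [embR_one, hone]
  · exact hσ_embM 0 0 n.zero_le n.zero_le r r' x
  · rw [embR_add, hadd₁]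
  · rw [embM_add, hadd₁]
  · have h := hσ_embM 0 i n.zero_le hi r m x
    rwa [embM_congr_heq (zero_add i) (extProd_deg_zero_left_heq (Φ := Φ) r m)] at h
  · have h := hσ_embM i 0 hi n.zero_le m r x
    rwa [extProd_deg_zero_right] at h
  · rw [← hσ_embM i j hi hj, embM_of_lt hij]
    exact map_zero (act x)
  · exact hσ_embM i j (by omega) (by omega) m m' x
  · conv_lhs => rw [eq_embR_add_sum_embM s]
    rw [hadd₁]
    exact congrArg _ (map_sum (act x) _ _)

end NTriv
end
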